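/- Fix 0 < q < 1 and φ ∈ ℝ (so that q e^{−4iφ} is automatically not a root of unity). Let V be a nonzero finite-dimensional complex inner product space and let E, F, K be linear endomorphisms of V with K invertible and normal (K K† = K† K, where K† is the Hilbert adjoint of K), satisfying: E K = q e^{−4iφ} K E; K F = q e^{−4iφ} F K; and E F − F E = (K K† − K⁻¹ (K†)⁻¹)/(q⁻¹ − q). Assume the family is irreducible: the only subspaces of V invariant under all of E, F, K, K† are {0} and V. Then there exist p ∈ ℕ with dim V = p + 1, a phase ψ ∈ ℝ, a sign σ ∈ {1, −1}, and a basis (v_0, …, v_p) of V such that: K v_j = q^{j−p/2} exp(−i(4(j−p/2)φ + ψ)) v_j; K† v_j = q^{j−p/2} exp(i(4(j−p/2)φ + ψ)) v_j; F v_j = σ √([p−j]_q [j+1]_q) v_{j+1} (with F v_p = 0); and E v_j = σ √([j]_q [p−j+1]_q) v_{j−1} (with E v_0 = 0). In other words, every finite-dimensional irreducible representation of the braided algebra U_{q,φ}(û(2)) is equivalent to one of the representations T_{l,ψ}, l = p/2. -/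

import Mathlib

noncomputable section

/-- The `q`-integer `[n]_q = (qⁿ − q⁻ⁿ)/(q − q⁻¹)`. -/
def qInt (q : ℝ) (n : ℤ) : ℝ := (q ^ n - q ^ (-n)) / (q - q⁻¹)

/-- The eigenvalue of `K` on the basis vector `e_j`:
`q^{j−p/2} exp(−i(4(j−p/2)φ + ψ))`. -/
def kCoef (q φ ψ : ℝ) (p j : ℕ) : ℂ :=
  ((q ^ ((j : ℝ) - (p : ℝ) / 2) : ℝ) : ℂ) *
    Complex.exp (-Complex.I * (4 * ((j : ℝ) - (p : ℝ) / 2) * φ + ψ))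

/-- The eigenvalue of `K' = K†` on the basis vector `e_j`:
`q^{j−p/2} exp(i(4(j−p/2)φ + ψ))`. -/
def kStarCoef (q φ ψ : ℝ) (p j : ℕ) : ℂ :=
  ((q ^ ((j : ℝ) - (p : ℝ) / 2) : ℝ) : ℂ) *
    Complex.exp (Complex.I * (4 * ((j : ℝ) - (p : ℝ) / 2) * φ + ψ))

/-- The coefficient `√([p−j]_q [j+1]_q)` of the raising operator `F`. -/
def fCoef (q : ℝ) (p j : ℕ) : ℝ :=
  Real.sqrt (qInt q ((p : ℤ) - (j : ℤ)) * qInt q ((j : ℤ) + 1))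

/-- The coefficient `√([j]_q [p−j+1]_q)` of the lowering operator `E`. -/
def eCoef (q : ℝ) (p j : ℕ) : ℝ :=
  Real.sqrt (qInt q (j : ℤ) * qInt q ((p : ℤ) - (j : ℤ) + 1))

/-!
Start from an eigenvector of `K` and apply `E` until the result vanishes: `E` multiplies
`K`-eigenvalues by `μ⁻¹`, where `μ = q e^{-4iφ}` has `|μ| = q ≠ 1`, so these eigenvalues are
distinct and finite dimension stops the chain. The last nonzero vector `v` satisfies `E v = 0`,
`K v = c v`, and `v_j = F^j v` is a `K`-eigenvector with eigenvalue `μ^j c`, nonzero exactly for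
`j ≤ p`. Normality makes `K†` act on `v_j` by the conjugate eigenvalue, so the commutator relation
gives `E v_{j+1} = a_{j+1} v_j` with `a_{j+1} = Σ_{i ≤ j} (N_i - N_i⁻¹)/(q⁻¹ - q)`,
`N_i = |μ^i c|² = q^{2i} |c|²`. The condition `a_{p+1} = 0` forces `|c|² = q^{-p}`, after which
`a_{j+1} = [p-j]_q [j+1]_q`; dividing `v_j` by `∏_{i<j} √a_{i+1}` gives the stated coefficients.
The span of the `v_j` is invariant under `E, F, K, K†`, hence all of `V`.
-/

theorem Nat.exists_forall_le_and_not_succ {P : ℕ → Prop} (h0 : P 0) (h : ∃ n, ¬ P n) :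
    ∃ p, (∀ j ≤ p, P j) ∧ ¬ P (p + 1) := by
  classical
  have hpos : Nat.find h ≠ 0 := fun h' => Nat.find_spec h (h' ▸ h0)
  refine ⟨Nat.find h - 1, fun j hj => not_not.mp (Nat.find_min h (by omega)), ?_⟩
  rw [Nat.sub_add_cancel (Nat.one_le_iff_ne_zero.mpr hpos)]
  exact Nat.find_spec h

theorem pow_mul_injective {𝕜 : Type*} [NormedDivisionRing 𝕜] {μ b : 𝕜} (hμ0 : μ ≠ 0)
    (hμ1 : ‖μ‖ ≠ 1) (hb : b ≠ 0) : Function.Injective fun n : ℕ => μ ^ n * b := by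
  intro m n h
  have hnorm : ‖μ‖ ^ m * ‖b‖ = ‖μ‖ ^ n * ‖b‖ := by
    simpa only [norm_mul, norm_pow] using congrArg norm h
  exact pow_right_injective₀ (norm_pos_iff.mpr hμ0) hμ1
    (mul_right_cancel₀ (norm_ne_zero_iff.mpr hb) hnorm)

theorem sq_mul_pow_eq_one_of_sum_sub_inv_eq_zero {x s : ℝ} (hx : 0 < x) (hs : 0 < s) {p : ℕ}
    (h : ∑ i ∈ Finset.range (p + 1), (x ^ i * s - (x ^ i * s)⁻¹) = 0) : s ^ 2 * x ^ p = 1 := by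
  set S := ∑ i ∈ Finset.range (p + 1), x ^ i
  have hS : 0 < S := Finset.sum_pos (fun i _ => pow_pos hx i) Finset.nonempty_range_add_one
  have hreflect : ∑ i ∈ Finset.range (p + 1), (x ^ i)⁻¹ = (x ^ p)⁻¹ * S := by
    rw [← Finset.sum_range_reflect, Finset.mul_sum]
    refine Finset.sum_congr rfl fun i hi => ?_
    have hip : i ≤ p := Nat.lt_succ_iff.mp (Finset.mem_range.mp hi)
    rw [Nat.add_sub_cancel, pow_sub₀ x hx.ne' hip, mul_inv, inv_inv]
  have hfactor : (s - s⁻¹ * (x ^ p)⁻¹) * S = 0 := by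
    rw [← h, Finset.sum_sub_distrib]
    simp only [mul_inv, ← Finset.sum_mul, hreflect]
    ring
  have hxp : 0 < x ^ p := pow_pos hx p
  have := (mul_eq_zero.mp hfactor).resolve_right hS.ne'
  field_simp at this
  linarith

namespace Module.End

variable {𝕜 M : Type*} [Field 𝕜] [AddCommGroup M] [Module 𝕜 M]

theorem apply_eq_inv_smul_of_mul_eq_one {A B : Module.End 𝕜 M} (h : A * B = 1) {c : 𝕜}
    (hc : c ≠ 0) {x : M} (hx : B x = c • x) : A x = c⁻¹ • x := by
  have h1 : A (B x) = x := by rw [← mul_apply, h, one_apply]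
  rw [hx, map_smul] at h1
  exact (eq_inv_smul_iff₀ hc).mpr h1

theorem pow_apply_eq_smul {T A : Module.End 𝕜 M} {μ : 𝕜} (hTA : T * A = μ • (A * T))
    {c : 𝕜} {v : M} (hv : T v = c • v) (n : ℕ) : T ((A ^ n) v) = (μ ^ n * c) • (A ^ n) v := by
  induction n with
  | zero => simpa using hv
  | succ n ih =>
    rw [pow_succ', mul_apply, ← mul_apply T, hTA, LinearMap.smul_apply, mul_apply, ih, map_smul,
      smul_smul, pow_succ]
    ring_nf

theorem exists_eq_zero_of_injective_eigenvalues [FiniteDimensional 𝕜 M] {T : Module.End 𝕜 M}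
    {c : ℕ → 𝕜} (hc : Function.Injective c) {w : ℕ → M} (hw : ∀ n, T (w n) = c n • w n) :
    ∃ n, w n = 0 := by
  by_contra! hne
  have hli : LinearIndependent 𝕜 w :=
    eigenvectors_linearIndependent' T c hc w fun n => ⟨mem_eigenspace_iff.mpr (hw n), hne n⟩
  simpa using hli.lt_aleph0_of_finite

theorem apply_succ_eq_sum_smul_of_commutator {E F : Module.End 𝕜 M} {v : ℕ → M} {r : ℕ → 𝕜}
    (hF : ∀ j, F (v j) = v (j + 1)) (hE : E (v 0) = 0)
    (hEF : ∀ j, E (F (v j)) - F (E (v j)) = r j • v j) (j : ℕ) :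
    E (v (j + 1)) = (∑ i ∈ Finset.range (j + 1), r i) • v j := by
  induction j with
  | zero => rw [← hF, ← sub_zero (E (F _)), ← map_zero F, ← hE, hEF]; simp
  | succ j ih =>
    rw [← hF, ← sub_add_cancel (E (F (v (j + 1)))) (F (E (v (j + 1)))), hEF, ih, map_smul, hF,
      Finset.sum_range_succ _ (j + 1), add_smul, add_comm]

theorem apply_prod_inv_smul_of_ladder {E F : Module.End 𝕜 M} {v : ℕ → M} {f : ℕ → 𝕜}
    (hF : ∀ j, F (v j) = v (j + 1)) (hE : ∀ j, E (v (j + 1)) = f j ^ 2 • v j)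
    (hf : ∀ j, f j = 0 → v (j + 1) = 0) (j : ℕ) :
    F ((∏ i ∈ Finset.range j, (f i)⁻¹) • v j) =
        f j • (∏ i ∈ Finset.range (j + 1), (f i)⁻¹) • v (j + 1) ∧
      E ((∏ i ∈ Finset.range (j + 1), (f i)⁻¹) • v (j + 1)) =
        f j • (∏ i ∈ Finset.range j, (f i)⁻¹) • v j := by
  simp only [map_smul, hF, hE, smul_smul, Finset.prod_range_succ]
  rcases eq_or_ne (f j) 0 with h | h
  · simp [h, hf j h]
  · constructor <;> congr 1 <;> field_simp

end Module.End

namespace LinearMap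

variable {V : Type*} [NormedAddCommGroup V] [InnerProductSpace ℂ V] [FiniteDimensional ℂ V]

theorem norm_adjoint_apply_eq_norm_apply {T : Module.End ℂ V}
    (hT : T * adjoint T = adjoint T * T) (v : V) : ‖adjoint T v‖ = ‖T v‖ := by
  have h : ‖adjoint T v‖ ^ 2 = ‖T v‖ ^ 2 := by
    rw [← inner_self_eq_norm_sq (𝕜 := ℂ), ← inner_self_eq_norm_sq (𝕜 := ℂ), adjoint_inner_left,
      ← Module.End.mul_apply, hT, Module.End.mul_apply, adjoint_inner_right]
  exact (sq_eq_sq₀ (norm_nonneg _) (norm_nonneg _)).mp h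

theorem adjoint_apply_eq_conj_smul {T : Module.End ℂ V}
    (hT : T * adjoint T = adjoint T * T) {c : ℂ} {v : V} (hv : T v = c • v) :
    adjoint T v = starRingEnd ℂ c • v := by
  set S : Module.End ℂ V := T - c • 1
  have hS : adjoint S = adjoint T - starRingEnd ℂ c • 1 := by
    simp [S, ← star_eq_adjoint, star_sub, star_smul, star_one]
  have hSnormal : S * adjoint S = adjoint S * S := by
    rw [hS]
    simp only [S, sub_mul, mul_sub, smul_mul_assoc, mul_smul_comm, one_mul, mul_one, hT]
    module
  have hSv : S v = 0 := by simp [S, hv]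
  have := norm_adjoint_apply_eq_norm_apply hSnormal v
  rw [hSv, norm_zero, norm_eq_zero, hS] at this
  simpa [sub_eq_zero] using this

end LinearMap

theorem qInt_pos {q : ℝ} (hq0 : 0 < q) (hq1 : q < 1) {n : ℤ} (hn : 0 < n) : 0 < qInt q n := by
  have hqn : q ^ n < 1 := zpow_lt_one₀ hq0 hq1 hn
  have hqn' : 1 < q ^ (-n) := one_lt_zpow_of_neg₀ hq0 hq1 (neg_neg_of_pos hn)
  have hqq : q < q⁻¹ := hq1.trans ((one_lt_inv₀ hq0).mpr hq1)
  exact div_pos_of_neg_of_neg (by linarith) (by linarith)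

theorem qInt_mul_qInt_add_one_sub (q : ℝ) (hq : q ≠ 0) (a b : ℤ) :
    qInt q a * qInt q (b + 1) - qInt q (a + 1) * qInt q b = qInt q (a - b) := by
  rcases eq_or_ne (q ^ 2 - 1) 0 with hd | hd
  · have : q - q⁻¹ = 0 := by
      rw [← mul_right_inj' hq, mul_zero, mul_sub, mul_inv_cancel₀ hq]
      linear_combination hd
    simp [qInt, this]
  simp only [qInt, zpow_add₀ hq, zpow_sub₀ hq, zpow_neg, zpow_one]
  field_simp
  ring

theorem sum_range_qInt_sub_two_mul (q : ℝ) (hq : q ≠ 0) (m : ℤ) (n : ℕ) :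
    ∑ i ∈ Finset.range n, qInt q (m - 2 * i) = qInt q (m - n + 1) * qInt q n := by
  induction n with
  | zero => simp [qInt]
  | succ n ih =>
    rw [Finset.sum_range_succ, ih]
    have := qInt_mul_qInt_add_one_sub q hq (m - n) n
    push_cast
    rw [show m - (n + 1) + 1 = m - n by ring, show m - 2 * n = m - n - n by ring]
    linarith

theorem inv_sub_inv_mul_zpow_sub_inv_eq_qInt (q : ℝ) (m : ℤ) :
    (q⁻¹ - q)⁻¹ * (q ^ m - (q ^ m)⁻¹) = qInt q (-m) := by
  rw [qInt, neg_neg, zpow_neg, div_eq_inv_mul, ← neg_sub q, inv_neg]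
  ring

theorem pow_mul_eq_zpow_of_mul_pow_eq_one {q s : ℝ} (hq : 0 < q) {p : ℕ} (h : s * q ^ p = 1)
    (i : ℕ) : (q ^ 2) ^ i * s = q ^ (2 * (i : ℤ) - p) := by
  rw [zpow_sub₀ hq.ne', zpow_mul, zpow_ofNat, zpow_natCast, zpow_natCast,
    eq_div_iff (by positivity), mul_assoc, h, mul_one]

theorem sum_range_inv_sub_mul_sub_inv_eq_qInt_mul_qInt {q s : ℝ} (hq : 0 < q) {p : ℕ}
    (h : s * q ^ p = 1) (n : ℕ) :
    ∑ i ∈ Finset.range n, (q⁻¹ - q)⁻¹ * ((q ^ 2) ^ i * s - ((q ^ 2) ^ i * s)⁻¹) =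
      qInt q (p - n + 1) * qInt q n := by
  simp only [pow_mul_eq_zpow_of_mul_pow_eq_one hq h, inv_sub_inv_mul_zpow_sub_inv_eq_qInt,
    neg_sub]
  exact sum_range_qInt_sub_two_mul q hq.ne' p n

theorem fCoef_pos {q : ℝ} (hq0 : 0 < q) (hq1 : q < 1) {p j : ℕ} (hj : j < p) :
    0 < fCoef q p j :=
  Real.sqrt_pos.mpr (mul_pos (qInt_pos hq0 hq1 (by omega)) (qInt_pos hq0 hq1 (by omega)))

theorem fCoef_sq {q : ℝ} (hq0 : 0 < q) (hq1 : q < 1) {p j : ℕ} (hj : j ≤ p) :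
    fCoef q p j ^ 2 = qInt q (p - j) * qInt q (j + 1) := by
  refine Real.sq_sqrt (mul_nonneg ?_ (qInt_pos hq0 hq1 (by omega)).le)
  rcases hj.lt_or_eq with hj | rfl
  · exact (qInt_pos hq0 hq1 (by omega)).le
  · simp [qInt]

theorem eCoef_succ (q : ℝ) (p j : ℕ) : eCoef q p (j + 1) = fCoef q p j := by
  rw [eCoef, fCoef, mul_comm]
  congr 3; push_cast; ring

theorem norm_eq_rpow_of_normSq_mul_pow_eq_one {q : ℝ} (hq : 0 < q) {c : ℂ} {p : ℕ}
    (h : Complex.normSq c * q ^ p = 1) : ‖c‖ = q ^ (-(p : ℝ) / 2) := by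
  have hrpow : (q ^ (-(p : ℝ) / 2)) ^ 2 = (q ^ p)⁻¹ := by
    rw [← Real.rpow_natCast, ← Real.rpow_mul hq.le,
      show -(p : ℝ) / 2 * (2 : ℕ) = -(p : ℝ) by push_cast; ring, Real.rpow_neg hq.le,
      Real.rpow_natCast]
  refine (sq_eq_sq₀ (norm_nonneg c) (Real.rpow_nonneg hq.le _)).mp ?_
  rw [hrpow, ← Complex.normSq_eq_norm_sq]
  exact eq_inv_of_mul_eq_one_left h

theorem kStarCoef_eq_conj (q φ ψ : ℝ) (p j : ℕ) :
    kStarCoef q φ ψ p j = starRingEnd ℂ (kCoef q φ ψ p j) := by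
  rw [kCoef, kStarCoef, map_mul, Complex.conj_ofReal, ← Complex.exp_conj]
  congr 2
  simp only [map_mul, map_add, map_neg, Complex.conj_I, Complex.conj_ofReal, map_ofNat,
    map_sub, map_div₀]
  ring

theorem kCoef_eq_pow_mul {q : ℝ} (hq : 0 < q) (φ : ℝ) {p : ℕ} {c : ℂ}
    (hc : ‖c‖ = q ^ (-(p : ℝ) / 2)) (j : ℕ) :
    kCoef q φ (2 * p * φ - Complex.arg c) p j =
      ((q : ℂ) * Complex.exp (-4 * Complex.I * φ)) ^ j * c := by
  have hrpow : q ^ ((j : ℝ) - p / 2) = q ^ j * q ^ (-(p : ℝ) / 2) := by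
    rw [sub_eq_add_neg, Real.rpow_add hq, Real.rpow_natCast, neg_div]
  nth_rewrite 2 [← Complex.norm_mul_exp_arg_mul_I c]
  rw [kCoef, hrpow, ← hc, mul_pow, ← Complex.exp_nat_mul]
  push_cast
  rw [mul_assoc, mul_assoc, mul_mul_mul_comm, ← Complex.exp_add, ← mul_assoc]
  congr 2
  ring

section HighestWeight

variable {V : Type*} [AddCommGroup V] [Module ℂ V] [FiniteDimensional ℂ V] [Nontrivial V]

theorem exists_highest_weight_vector {E K Kinv : Module.End ℂ V} (hKinv' : Kinv * K = 1)
    {μ : ℂ} (hμ0 : μ ≠ 0) (hμ1 : ‖μ‖ ≠ 1) (hEK : E * K = μ • (K * E)) :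
    ∃ (v : V) (c : ℂ), v ≠ 0 ∧ c ≠ 0 ∧ K v = c • v ∧ E v = 0 := by
  obtain ⟨ν, hν⟩ := Module.End.exists_eigenvalue K
  obtain ⟨u, hu⟩ := hν.exists_hasEigenvector
  have hKu : K u = ν • u := hu.apply_eq_smul
  have hν0 : ν ≠ 0 := by
    rintro rfl
    apply hu.right
    rw [← Module.End.one_apply (R := ℂ) u, ← hKinv', Module.End.mul_apply, hKu, zero_smul, map_zero]
  have hKE : K * E = μ⁻¹ • (E * K) := by rw [hEK, smul_smul, inv_mul_cancel₀ hμ0, one_smul]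
  have hKEu := Module.End.pow_apply_eq_smul hKE hKu
  have hμinv : ‖μ⁻¹‖ ≠ 1 := by rwa [norm_inv, Ne, inv_eq_one]
  have hvanish := Module.End.exists_eq_zero_of_injective_eigenvalues
    (pow_mul_injective (inv_ne_zero hμ0) hμinv hν0) hKEu
  obtain ⟨n, hn, hn1⟩ := Nat.exists_forall_le_and_not_succ (P := fun n => (E ^ n) u ≠ 0)
    (by simpa using hu.right) (by simpa using hvanish)
  refine ⟨(E ^ n) u, μ⁻¹ ^ n * ν, hn n le_rfl, mul_ne_zero (pow_ne_zero _ (inv_ne_zero hμ0)) hν0,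
    hKEu n, ?_⟩
  simpa [pow_succ'] using hn1

end HighestWeight

section Representation

variable {V : Type*} [NormedAddCommGroup V] [InnerProductSpace ℂ V] [FiniteDimensional ℂ V]
  {E F K Kinv : Module.End ℂ V}

open LinearMap in
theorem commutator_apply_eq_smul {q : ℝ} (hKinv : K * Kinv = 1) (hKinv' : Kinv * K = 1)
    (hnormal : K * adjoint K = adjoint K * K)
    (hEF : E * F - F * E = ((q : ℂ)⁻¹ - q)⁻¹ • (K * adjoint K - Kinv * adjoint Kinv))
    {c : ℂ} (hc : c ≠ 0) {v : V} (hv : K v = c • v) :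
    E (F v) - F (E v) =
      (((q⁻¹ - q)⁻¹ * (Complex.normSq c - (Complex.normSq c)⁻¹) : ℝ) : ℂ) • v := by
  have hadj : adjoint Kinv * adjoint K = 1 := by
    rw [← star_eq_adjoint, ← star_eq_adjoint, ← star_mul, hKinv, star_one]
  have hK'v := adjoint_apply_eq_conj_smul hnormal hv
  have hKinvv := Module.End.apply_eq_inv_smul_of_mul_eq_one hKinv' hc hv
  have hKinv'v := Module.End.apply_eq_inv_smul_of_mul_eq_one hadj
    ((map_ne_zero (starRingEnd ℂ)).mpr hc) hK'v
  have h := congrArg (fun T : Module.End ℂ V => T v) hEF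
  simp only [LinearMap.sub_apply, Module.End.mul_apply, LinearMap.smul_apply] at h
  rw [h, hK'v, map_smul, hv, hKinv'v, map_smul, hKinvv, smul_smul, smul_smul, ← sub_smul,
    smul_smul, ← mul_inv, mul_comm ((starRingEnd ℂ) c), Complex.mul_conj]
  push_cast
  rfl

theorem lowering_apply_pow_succ {q : ℝ} (hq0 : 0 < q) (hq1 : q < 1) {μ : ℂ} (hμ : ‖μ‖ = q)
    (hKinv : K * Kinv = 1) (hKinv' : Kinv * K = 1)
    (hnormal : K * LinearMap.adjoint K = LinearMap.adjoint K * K)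
    (hKF : K * F = μ • (F * K))
    (hEF : E * F - F * E =
      ((q : ℂ)⁻¹ - q)⁻¹ • (K * LinearMap.adjoint K - Kinv * LinearMap.adjoint Kinv))
    {v : V} {c : ℂ} (hc : c ≠ 0) (hKv : K v = c • v) (hEv : E v = 0) {p : ℕ}
    (hp : (F ^ p) v ≠ 0) (hp1 : (F ^ (p + 1)) v = 0) :
    Complex.normSq c * q ^ p = 1 ∧
      ∀ j, E ((F ^ (j + 1)) v) = ((fCoef q p j ^ 2 : ℝ) : ℂ) • (F ^ j) v := by
  set s := Complex.normSq c
  have hs : 0 < s := Complex.normSq_pos.mpr hc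
  have hμ0 : μ ≠ 0 := norm_pos_iff.mp (hμ ▸ hq0)
  have hnormSq : ∀ i, Complex.normSq (μ ^ i * c) = (q ^ 2) ^ i * s := fun i => by
    rw [Complex.normSq_mul, map_pow, Complex.normSq_eq_norm_sq, hμ]
  have hKFv := Module.End.pow_apply_eq_smul hKF hKv
  have hlower := Module.End.apply_succ_eq_sum_smul_of_commutator (v := fun j => (F ^ j) v)
    (fun j => by rw [← Module.End.mul_apply, ← pow_succ']) hEv fun j => by
      rw [commutator_apply_eq_smul hKinv hKinv' hnormal hEF
        (mul_ne_zero (pow_ne_zero j hμ0) hc) (hKFv j), hnormSq]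
  simp only [← Complex.ofReal_sum] at hlower
  have hsum : ∑ i ∈ Finset.range (p + 1), ((q ^ 2) ^ i * s - ((q ^ 2) ^ i * s)⁻¹) = 0 := by
    have h := hlower p
    rw [hp1, map_zero, eq_comm, smul_eq_zero, Complex.ofReal_eq_zero, ← Finset.mul_sum] at h
    have hq : (q⁻¹ - q)⁻¹ ≠ 0 :=
      inv_ne_zero (sub_ne_zero.mpr (hq1.trans ((one_lt_inv₀ hq0).mpr hq1)).ne')
    exact (mul_eq_zero.mp (h.resolve_right hp)).resolve_left hq
  have hsq : s * q ^ p = 1 := (pow_eq_one_iff_of_nonneg (by positivity) two_ne_zero).mp (by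
    rw [← sq_mul_pow_eq_one_of_sum_sub_inv_eq_zero (pow_pos hq0 2) hs hsum]; ring)
  refine ⟨hsq, fun j => ?_⟩
  rw [hlower j]
  by_cases hj : j ≤ p
  · rw [sum_range_inv_sub_mul_sub_inv_eq_qInt_mul_qInt hq0 hsq, fCoef_sq hq0 hq1 hj]
    congr 3
    push_cast
    ring_nf
  · rw [Module.End.pow_map_zero_of_le (by omega) hp1, smul_zero, smul_zero]

theorem exists_weight_string [Nontrivial V] {q : ℝ} (hq0 : 0 < q) (hq1 : q < 1) {μ : ℂ} (hμ : ‖μ‖ = q)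
    (hKinv : K * Kinv = 1) (hKinv' : Kinv * K = 1)
    (hnormal : K * LinearMap.adjoint K = LinearMap.adjoint K * K)
    (hEK : E * K = μ • (K * E)) (hKF : K * F = μ • (F * K))
    (hEF : E * F - F * E =
      ((q : ℂ)⁻¹ - q)⁻¹ • (K * LinearMap.adjoint K - Kinv * LinearMap.adjoint Kinv)) :
    ∃ (p : ℕ) (c : ℂ) (w : ℕ → V), ‖c‖ = q ^ (-(p : ℝ) / 2) ∧ (∀ j ≤ p, w j ≠ 0) ∧
      (∀ j, p < j → w j = 0) ∧ (∀ j, K (w j) = (μ ^ j * c) • w j) ∧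
      (∀ j, F (w j) = (fCoef q p j : ℂ) • w (j + 1)) ∧ E (w 0) = 0 ∧
      ∀ j, E (w (j + 1)) = (fCoef q p j : ℂ) • w j := by
  have hμ0 : μ ≠ 0 := norm_pos_iff.mp (hμ ▸ hq0)
  have hμ1 : ‖μ‖ ≠ 1 := hμ ▸ hq1.ne
  obtain ⟨v, c, hv, hc, hKv, hEv⟩ := exists_highest_weight_vector hKinv' hμ0 hμ1 hEK
  have hKFv := Module.End.pow_apply_eq_smul hKF hKv
  have hvanish := Module.End.exists_eq_zero_of_injective_eigenvalues
    (pow_mul_injective hμ0 hμ1 hc) hKFv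
  obtain ⟨p, hp, hp1⟩ := Nat.exists_forall_le_and_not_succ (P := fun n => (F ^ n) v ≠ 0)
    (by simpa using hv) (by simpa using hvanish)
  rw [not_not] at hp1
  obtain ⟨hnorm, hE⟩ :=
    lowering_apply_pow_succ hq0 hq1 hμ hKinv hKinv' hnormal hKF hEF hc hKv hEv (hp p le_rfl) hp1
  have hf : ∀ j, (fCoef q p j : ℂ) = 0 → (F ^ (j + 1)) v = 0 := fun j hj => by
    refine Module.End.pow_map_zero_of_le (by_contra fun hjp => ?_) hp1
    exact (fCoef_pos hq0 hq1 (by omega : j < p)).ne' (Complex.ofReal_eq_zero.mp hj)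
  have hrescale := Module.End.apply_prod_inv_smul_of_ladder (v := fun j => (F ^ j) v)
    (f := fun j => (fCoef q p j : ℂ)) (fun j => by rw [← Module.End.mul_apply, ← pow_succ'])
    (fun j => by rw [hE j]; push_cast; rfl) hf
  refine ⟨p, c, fun j => (∏ i ∈ Finset.range j, ((fCoef q p i : ℂ))⁻¹) • (F ^ j) v,
    norm_eq_rpow_of_normSq_mul_pow_eq_one hq0 hnorm, fun j hj => smul_ne_zero ?_ (hp j hj),
    fun j hj => by simp [Module.End.pow_map_zero_of_le hj hp1],
    fun j => by rw [map_smul, hKFv, smul_comm], fun j => (hrescale j).1, by simpa using hEv,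
    fun j => (hrescale j).2⟩
  refine Finset.prod_ne_zero_iff.mpr fun i hi => inv_ne_zero ?_
  exact Complex.ofReal_ne_zero.mpr (fCoef_pos hq0 hq1 ((Finset.mem_range.mp hi).trans_le hj)).ne'

theorem exists_basis_of_weight_string
    (hirr : ∀ W : Submodule ℂ V,
      (∀ v ∈ W, E v ∈ W) → (∀ v ∈ W, F v ∈ W) →
      (∀ v ∈ W, K v ∈ W) → (∀ v ∈ W, LinearMap.adjoint K v ∈ W) →
      W = ⊥ ∨ W = ⊤)
    {p : ℕ} {w : ℕ → V} {c f : ℕ → ℂ} (hc : Function.Injective c) (hw : ∀ j ≤ p, w j ≠ 0)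
    (hw0 : ∀ j, p < j → w j = 0) (hK : ∀ j, K (w j) = c j • w j)
    (hK' : ∀ j, LinearMap.adjoint K (w j) = starRingEnd ℂ (c j) • w j)
    (hF : ∀ j, F (w j) = f j • w (j + 1)) (hE0 : E (w 0) = 0)
    (hE : ∀ j, E (w (j + 1)) = f j • w j) :
    ∃ b : Module.Basis (Fin (p + 1)) ℂ V, ∀ j, b j = w j := by
  set W := Submodule.span ℂ (Set.range fun j : Fin (p + 1) => w j)
  have hmem : ∀ k, w k ∈ W := fun k => by
    rcases le_or_gt k p with hk | hk
    · exact Submodule.subset_span ⟨⟨k, by omega⟩, rfl⟩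
    · rw [hw0 k hk]; exact W.zero_mem
  have hinv : ∀ L : Module.End ℂ V, (∀ j, L (w j) ∈ W) → ∀ x ∈ W, L x ∈ W := fun L hL x hx =>
    (Submodule.span_le (p := W.comap L)).mpr
      (Set.range_subset_iff.mpr fun j : Fin (p + 1) => hL j) hx
  have hW : W = ⊤ := by
    refine (hirr W (hinv E ?_) (hinv F ?_) (hinv K ?_) (hinv _ ?_)).resolve_left fun h => ?_
    · rintro (_ | j)
      · rw [hE0]; exact W.zero_mem
      · rw [hE]; exact W.smul_mem _ (hmem j)
    · exact fun j => hF j ▸ W.smul_mem _ (hmem _)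
    · exact fun j => hK j ▸ W.smul_mem _ (hmem _)
    · exact fun j => hK' j ▸ W.smul_mem _ (hmem _)
    · exact hw 0 p.zero_le ((Submodule.mem_bot ℂ).mp (h ▸ hmem 0))
  have hli : LinearIndependent ℂ fun j : Fin (p + 1) => w j :=
    Module.End.eigenvectors_linearIndependent' K _ (hc.comp Fin.val_injective) _ fun j =>
      ⟨Module.End.mem_eigenspace_iff.mpr (hK j), hw j (Nat.lt_succ_iff.mp j.isLt)⟩
  exact ⟨Module.Basis.mk hli hW.ge, Module.Basis.mk_apply hli hW.ge⟩

end Representation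

/-- Every finite-dimensional irreducible representation of the braided algebra
`U_{q,φ}(û(2))` (given by operators `E, F, K` with `K` invertible and normal, satisfying
the defining relations, with no nontrivial invariant subspace) is equivalent to one of
the representations `T_{l,ψ}`, `l = p/2`. -/
theorem uqu2_classification_of_irreducibles
    (q φ : ℝ) (hq0 : 0 < q) (hq1 : q < 1)
    {V : Type*} [NormedAddCommGroup V] [InnerProductSpace ℂ V]
    [FiniteDimensional ℂ V] [Nontrivial V]
    (E F K Kinv : Module.End ℂ V)
    (hKinv : K * Kinv = 1) (hKinv' : Kinv * K = 1)
    (hnormal : K * LinearMap.adjoint K = LinearMap.adjoint K * K)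
    (hEK : E * K = ((q : ℂ) * Complex.exp (-4 * Complex.I * (φ : ℂ))) • (K * E))
    (hKF : K * F = ((q : ℂ) * Complex.exp (-4 * Complex.I * (φ : ℂ))) • (F * K))
    (hEF : E * F - F * E =
      ((q : ℂ)⁻¹ - (q : ℂ))⁻¹ •
        (K * LinearMap.adjoint K - Kinv * LinearMap.adjoint Kinv))
    (hirr : ∀ W : Submodule ℂ V,
      (∀ v ∈ W, E v ∈ W) → (∀ v ∈ W, F v ∈ W) →
      (∀ v ∈ W, K v ∈ W) → (∀ v ∈ W, LinearMap.adjoint K v ∈ W) →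
      W = ⊥ ∨ W = ⊤) :
    ∃ (p : ℕ) (ψ σ : ℝ) (b : Module.Basis (Fin (p + 1)) ℂ V),
      Module.finrank ℂ V = p + 1 ∧
      (σ = 1 ∨ σ = -1) ∧
      (∀ j : Fin (p + 1), K (b j) = kCoef q φ ψ p j • b j) ∧
      (∀ j : Fin (p + 1), LinearMap.adjoint K (b j) = kStarCoef q φ ψ p j • b j) ∧
      (∀ (j : Fin (p + 1)) (h : (j : ℕ) + 1 < p + 1),
        F (b j) = ((σ * fCoef q p j : ℝ) : ℂ) • b (⟨(j : ℕ) + 1, h⟩ : Fin (p + 1))) ∧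
      F (b (Fin.last p)) = 0 ∧
      (∀ (j : Fin (p + 1)) (h : 0 < (j : ℕ)),
        E (b j) = ((σ * eCoef q p j : ℝ) : ℂ) •
          b (⟨(j : ℕ) - 1, Nat.lt_of_le_of_lt (Nat.sub_le _ _) j.isLt⟩ : Fin (p + 1))) ∧
      E (b (0 : Fin (p + 1))) = 0 := by
  have hμ : ‖(q : ℂ) * Complex.exp (-4 * Complex.I * φ)‖ = q := by
    simp [Complex.norm_exp, hq0.le]
  obtain ⟨p, c, w, hc, hw, hw0, hKw, hFw, hEw0, hEw⟩ :=
    exists_weight_string hq0 hq1 hμ hKinv hKinv' hnormal hEK hKF hEF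
  have hK'w := fun j => LinearMap.adjoint_apply_eq_conj_smul hnormal (hKw j)
  have hinj := pow_mul_injective (norm_pos_iff.mp (by rw [hμ]; exact hq0))
    (by rw [hμ]; exact hq1.ne) (norm_pos_iff.mp (by rw [hc]; exact Real.rpow_pos_of_pos hq0 _))
  obtain ⟨b, hb⟩ := exists_basis_of_weight_string hirr hinj hw hw0 hKw hK'w hFw hEw0 hEw
  refine ⟨p, 2 * p * φ - c.arg, 1, b, by simp [Module.finrank_eq_card_basis b], Or.inl rfl,
    fun j => ?_, fun j => ?_, fun j _ => ?_, ?_, fun j hj => ?_, ?_⟩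
  · rw [hb, hKw, kCoef_eq_pow_mul hq0 φ hc]
  · rw [hb, hK'w, kStarCoef_eq_conj, kCoef_eq_pow_mul hq0 φ hc]
  · simp [hb, hFw]
  · simp [hb, hFw, hw0]
  · obtain ⟨k, hk⟩ := Nat.exists_eq_add_of_lt hj
    simp [hb, hk, hEw, eCoef_succ]
  · simp [hb, hEw0]
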